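/- arXiv:2508.00113 — 2 statements merged into one kernel-verified Lean document; each statement's English description precedes it below -/
import Mathlib

section
/- Let φ : A → B be a unital completely positive map between unital C*-algebras and let a ∈ A satisfy φ(a)φ(a)* = φ(aa*). Then φ(ac) = φ(a)φ(c) for all c ∈ A. -/
def IsUCP {A B : Type*} [Ring A] [StarRing A] [Algebra ℂ A]
    [Ring B] [StarRing B] [Algebra ℂ B] (φ : A →ₗ[ℂ] B) : Prop :=
  φ 1 = 1 ∧ ∀ (k : ℕ) (a : Matrix (Fin k) (Fin k) A),
    (∃ b : Matrix (Fin k) (Fin k) A, a = star b * b) →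
    ∃ c : Matrix (Fin k) (Fin k) B, a.map φ = star c * c

theorem sum_star_mul_self_eq_zero' {B : Type*} [CStarAlgebra B] {n : ℕ} (f : Fin n → B)
    (h : ∑ k, star (f k) * f k = 0) : ∀ k, f k = 0 := by
  letI : PartialOrder B := CStarAlgebra.spectralOrder B
  letI : StarOrderedRing B := CStarAlgebra.spectralOrderedRing B
  intro k
  have hk : star (f k) * f k = 0 := by
    have hnonneg : ∀ j ∈ Finset.univ, (0:B) ≤ star (f j) * f j := fun j _ =>
      star_mul_self_nonneg _
    exact (Finset.sum_eq_zero_iff_of_nonneg hnonneg).mp h k (Finset.mem_univ k)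
  exact (CStarRing.star_mul_self_eq_zero_iff _).mp hk


/-- Choi's theorem on the left multiplicative domain: equality in the Schwarz inequality
`φ(a)φ(a)* = φ(aa*)` implies `φ(ac) = φ(a)φ(c)` for all `c`. -/
theorem left_multiplicative_domain {A B : Type*} [CStarAlgebra A] [CStarAlgebra B]
    (φ : A →ₗ[ℂ] B) (hφ : IsUCP φ) (a : A)
    (ha : φ a * star (φ a) = φ (a * star a)) :
    ∀ c : A, φ (a * c) = φ a * φ c := by
  obtain ⟨hone, hpos⟩ := hφ
  intro c
  set v : Fin 3 → A := ![star a, c, 1] with hv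
  set M : Matrix (Fin 3) (Fin 3) A := Matrix.of (fun i j => star (v i) * v j) with hMdef
  have hM : ∃ b : Matrix (Fin 3) (Fin 3) A, M = star b * b := by
    refine ⟨Matrix.of (fun i j => if i = 0 then v j else 0), ?_⟩
    ext i j
    simp [Matrix.mul_apply, Matrix.star_apply, Fin.sum_univ_three, hMdef]
  obtain ⟨d, hd⟩ := hpos 3 M hM
  have key : ∀ i j, φ (star (v i) * v j) = ∑ k, star (d k i) * d k j := by
    intro i j
    have := congrFun (congrFun hd i) j
    simpa [Matrix.map_apply, Matrix.mul_apply, Matrix.star_apply, hMdef] using this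
  -- star preservation for a
  have hstar : φ (star a) = star (φ a) := by
    have h20 : φ (star a) = ∑ k, star (d k 2) * d k 0 := by
      have := key 2 0
      simpa [hv] using this
    have h02 : φ a = ∑ k, star (d k 0) * d k 2 := by
      have := key 0 2
      simpa [hv] using this
    rw [h20, h02, star_sum]
    exact Finset.sum_congr rfl fun k _ => by simp [star_mul]
  -- general expansion
  have expand : ∀ (p q : Fin 3) (s t : B),
      ∑ k, star (d k p - d k 2 * s) * (d k q - d k 2 * t)
        = φ (star (v p) * v q) - φ (star (v p) * v 2) * t
          - star s * φ (star (v 2) * v q) + star s * (φ (star (v 2) * v 2) * t) := by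
    intro p q s t
    have step : ∀ k, star (d k p - d k 2 * s) * (d k q - d k 2 * t)
        = star (d k p) * d k q - (star (d k p) * d k 2) * t
          - star s * (star (d k 2) * d k q) + star s * ((star (d k 2) * d k 2) * t) := by
      intro k
      simp only [star_sub, star_mul]
      noncomm_ring
    calc ∑ k, star (d k p - d k 2 * s) * (d k q - d k 2 * t)
        = ∑ k, (star (d k p) * d k q - (star (d k p) * d k 2) * t
          - star s * (star (d k 2) * d k q) + star s * ((star (d k 2) * d k 2) * t)) :=
          Finset.sum_congr rfl fun k _ => step k
      _ = (∑ k, star (d k p) * d k q) - (∑ k, star (d k p) * d k 2) * t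
          - star s * (∑ k, star (d k 2) * d k q)
          + star s * ((∑ k, star (d k 2) * d k 2) * t) := by
          rw [Finset.sum_add_distrib, Finset.sum_sub_distrib, Finset.sum_sub_distrib,
            Finset.sum_mul, ← Finset.mul_sum, ← Finset.sum_mul, ← Finset.mul_sum]
          simp [Finset.sum_mul]
      _ = _ := by rw [← key, ← key, ← key, ← key]
  -- the vanishing sum
  set w : Fin 3 → B := fun k => d k 0 - d k 2 * star (φ a) with hw
  have hsum1 : ∑ k, star (w k) * w k = 0 := by
    have := expand 0 0 (star (φ a)) (star (φ a))
    rw [hw, this]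
    simp only [hv]
    simp only [Matrix.cons_val_zero, Matrix.cons_val_two, Matrix.tail_cons, Matrix.head_cons,
      star_star, mul_one, one_mul, star_one, star_star]
    rw [hstar, hone, one_mul, ← ha]
    abel
  have hzero : ∀ k, w k = 0 := sum_star_mul_self_eq_zero' _ hsum1
  have hD : ∑ k, star (w k) * (d k 1 - d k 2 * φ c) = 0 := by
    refine Finset.sum_eq_zero fun k _ => by rw [hzero k]; simp
  have hD2 : φ (a * c) - φ a * φ c = 0 := by
    have := expand 0 1 (star (φ a)) (φ c)
    rw [hw] at hD
    rw [this] at hD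
    simp only [hv] at hD
    simp only [Matrix.cons_val_zero, Matrix.cons_val_one, Matrix.cons_val_two, Matrix.tail_cons,
      Matrix.head_cons, star_star, mul_one, one_mul, star_one] at hD
    rw [hone, one_mul] at hD
    rw [← hD]
    abel

  exact sub_eq_zero.mp hD2
end

section
/- Let φ : A → B be a unital completely positive map between unital C*-algebras. Then the multiplicative domain m(φ) = {a ∈ A : φ(a*a) = φ(a)*φ(a) and φ(aa*) = φ(a)φ(a)*} is a C*-subalgebra of A, and the restriction of φ to m(φ) is a unital *-homomorphism. -/
/-!
Complete positivity applied to `!![1, a; 0, 0]ᴴ * !![1, a; 0, 0]` makes the matrix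
`!![1, φ a; φ (a⋆), φ (a⋆ a)]` positive. Being hermitian, it gives `φ (a⋆) = (φ a)⋆`; its
quadratic form at `(-φ a, 1)` gives the Kadison–Schwarz inequality `(φ a)⋆ φ a ≤ φ (a⋆ a)`.
If this is an equality at `a`, the inequality at `b + t a` (`t` real) has a defect affine in `t`,
so the real part of `φ (b⋆ a) - (φ b)⋆ φ a` vanishes; replacing `b` by `i b` kills the imaginary
part. Hence `m(φ)` is the set of `a` with `φ (c a) = φ c φ a` and `φ (a c) = φ a φ c` for all
`c`, visibly a ⋆-subalgebra on which `φ` is multiplicative, and closed since positive maps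
between C⋆-algebras are bounded.
-/

namespace LinearMap

variable {R A B : Type*} [CommSemiring R] [Semiring A] [Algebra R A] [Semiring B] [Algebra R B]

/-- The multiplicative domain in its bimodule form; for ucp maps `IsUCP.mem_mulDomain_iff`
identifies it with the set where the Schwarz inequality is an equality for `a` and `a⋆`. -/
def mulDomain (φ : A →ₗ[R] B) : NonUnitalSubalgebra R A where
  carrier := {a | ∀ c, φ (c * a) = φ c * φ a ∧ φ (a * c) = φ a * φ c}
  add_mem' {a b} ha hb c := by
    simp only [mul_add, add_mul, map_add, (ha c).1, (hb c).1, (ha c).2, (hb c).2, and_self]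
  zero_mem' c := by simp
  mul_mem' {a b} ha hb c :=
    ⟨by rw [← mul_assoc, (hb _).1, (ha c).1, (ha b).2, mul_assoc],
      by rw [mul_assoc, (ha _).2, (hb c).2, (ha b).2, mul_assoc]⟩
  smul_mem' r a ha c := by
    simp only [mul_smul_comm, smul_mul_assoc, map_smul, (ha c).1, (ha c).2, and_self]

variable {φ : A →ₗ[R] B}

theorem mem_mulDomain {a : A} :
    a ∈ φ.mulDomain ↔ ∀ c, φ (c * a) = φ c * φ a ∧ φ (a * c) = φ a * φ c :=
  Iff.rfl

theorem one_mem_mulDomain (h : φ 1 = 1) : 1 ∈ φ.mulDomain := fun c => by simp [h]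

theorem star_mem_mulDomain [StarRing A] [StarRing B] (h : ∀ a, φ (star a) = star (φ a)) {a : A}
    (ha : a ∈ φ.mulDomain) : star a ∈ φ.mulDomain := fun c =>
  ⟨calc φ (c * star a) = star (φ (a * star c)) := by rw [← h, star_mul, star_star]
      _ = φ c * φ (star a) := by rw [(ha _).2, star_mul, h, h, star_star],
    calc φ (star a * c) = star (φ (star c * a)) := by rw [← h, star_mul, star_star]
      _ = φ (star a) * φ c := by rw [(ha _).1, star_mul, h, h, star_star]⟩

theorem isClosed_mulDomain [TopologicalSpace A] [TopologicalSpace B] [ContinuousMul A]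
    [ContinuousMul B] [T2Space B] (hφ : Continuous φ) : IsClosed (φ.mulDomain : Set A) := by
  have : (φ.mulDomain : Set A) =
      ⋂ c, {a | φ (c * a) = φ c * φ a} ∩ {a | φ (a * c) = φ a * φ c} := by
    ext a; simp [mem_mulDomain, Set.mem_iInter]
  rw [this]
  exact isClosed_iInter fun c => (isClosed_eq (by fun_prop) (by fun_prop)).inter
    (isClosed_eq (by fun_prop) (by fun_prop))

end LinearMap

section

variable {E : Type*} [AddCommGroup E] [PartialOrder E] [Module ℝ E]
  [PosSMulMono ℝ E] [TopologicalSpace E] [ClosedIciTopology E] [ContinuousAdd E]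
  [ContinuousSMul ℝ E] {p q : E}

theorem nonneg_of_forall_nonneg_add_smul (h : ∀ t : ℝ, 0 < t → 0 ≤ p + t • q) : 0 ≤ q := by
  have hlim : Filter.Tendsto (fun t : ℝ => t⁻¹ • p + q) Filter.atTop (nhds q) := by
    simpa using ((tendsto_inv_atTop_zero (𝕜 := ℝ)).smul_const p).add_const q
  refine ge_of_tendsto hlim (Filter.eventually_gt_atTop 0 |>.mono fun t ht => ?_)
  simpa [smul_add, smul_smul, inv_mul_cancel₀ ht.ne'] using
    smul_nonneg (inv_nonneg.2 ht.le) (h t ht)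

theorem eq_zero_of_forall_nonneg_add_smul [IsOrderedAddMonoid E]
    (h : ∀ t : ℝ, 0 ≤ p + t • q) : q = 0 :=
  le_antisymm
    (neg_nonneg.1 <| nonneg_of_forall_nonneg_add_smul fun t _ => by simpa using h (-t))
    (nonneg_of_forall_nonneg_add_smul fun t _ => h t)

end

namespace IsUCP

open Matrix

section Algebraic

variable {A B : Type*} [Ring A] [StarRing A] [Algebra ℂ A] [Ring B] [StarRing B] [Algebra ℂ B]
  {φ : A →ₗ[ℂ] B}

theorem exists_twoByTwo_eq_conjTranspose_mul_self (hφ : IsUCP φ) (a : A) :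
    ∃ c : Matrix (Fin 2) (Fin 2) B, !![1, φ a; φ (star a), φ (star a * a)] = cᴴ * c := by
  obtain ⟨c, hc⟩ := hφ.2 2 (!![1, a; 0, 0]ᴴ * !![1, a; 0, 0]) ⟨_, rfl⟩
  refine ⟨c, ?_⟩
  rw [← star_eq_conjTranspose, ← hc]
  ext i j
  fin_cases i <;> fin_cases j <;> simp [mul_apply, Fin.sum_univ_two, hφ.1]

theorem map_star (hφ : IsUCP φ) (a : A) : φ (star a) = star (φ a) := by
  obtain ⟨c, hc⟩ := hφ.exists_twoByTwo_eq_conjTranspose_mul_self a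
  simpa [← hc] using ((isHermitian_conjTranspose_mul_self c).apply 1 0).symm

theorem star_map_mul_map_le [PartialOrder B] [StarOrderedRing B] (hφ : IsUCP φ) (a : A) :
    star (φ a) * φ a ≤ φ (star a * a) := by
  obtain ⟨c, hc⟩ := hφ.exists_twoByTwo_eq_conjTranspose_mul_self a
  have h := (posSemidef_conjTranspose_mul_self c).dotProduct_mulVec_nonneg ![-φ a, 1]
  simpa [← hc, dotProduct, mulVec, Fin.sum_univ_two, hφ.map_star] using h

end Algebraic

section CStar

variable {A B : Type*} [Ring A] [StarRing A] [Algebra ℂ A] [StarModule ℂ A] [CStarAlgebra B]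
  {φ : A →ₗ[ℂ] B}

theorem map_star_mul_of_map_star_mul_self (hφ : IsUCP φ) {a : A}
    (ha : φ (star a * a) = star (φ a) * φ a) (b : A) :
    φ (star b * a) = star (φ b) * φ a := by
  let _ : PartialOrder B := CStarAlgebra.spectralOrder B
  let _ : StarOrderedRing B := CStarAlgebra.spectralOrderedRing B
  set D : A → B := fun b => φ (star b * a) - star (φ b) * φ a with hD
  -- `D b + star (D b)` is the coefficient of `t` in the Schwarz defect at `b + t • a`.
  have hre (b : A) : D b + star (D b) = 0 := by
    refine eq_zero_of_forall_nonneg_add_smul (p := φ (star b * b) - star (φ b) * φ b) fun t => ?_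
    have h := sub_nonneg.2 (hφ.star_map_mul_map_le (b + (t : ℂ) • a))
    have hsa : φ (star a * b) = star (φ (star b * a)) := by
      rw [← hφ.map_star, star_mul, star_star]
    convert h using 1
    simp only [hD, star_add, star_smul, map_add, map_smul, add_mul, mul_add, smul_mul_assoc,
      mul_smul_comm, star_sub, star_mul, star_star, Complex.star_def, Complex.conj_ofReal,
      hsa, ha, ← Complex.coe_smul]
    module
  have hI : D (Complex.I • b) = -Complex.I • D b := by
    simp only [hD, star_smul, Complex.star_def, Complex.conj_I, map_smul, smul_mul_assoc, smul_sub]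
  have hstar : star (D b) = D b := by
    have h := hre (Complex.I • b)
    rw [hI, star_smul, Complex.star_def, map_neg, Complex.conj_I] at h
    have h' : Complex.I • (star (D b) - D b) = 0 := by rw [← h]; module
    exact sub_eq_zero.1 ((smul_eq_zero.1 h').resolve_left Complex.I_ne_zero)
  rw [← sub_eq_zero]
  have h := hre b
  rw [hstar, ← two_smul ℂ] at h
  exact (smul_eq_zero.1 h).resolve_left two_ne_zero

theorem map_mul_of_map_star_mul_self (hφ : IsUCP φ) {a : A}
    (ha : φ (star a * a) = star (φ a) * φ a) (c : A) : φ (c * a) = φ c * φ a := by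
  simpa [hφ.map_star] using hφ.map_star_mul_of_map_star_mul_self ha (star c)

theorem map_mul_of_map_mul_star_self (hφ : IsUCP φ) {a : A}
    (ha : φ (a * star a) = φ a * star (φ a)) (c : A) : φ (a * c) = φ a * φ c := by
  have ha' : φ (star (star a) * star a) = star (φ (star a)) * φ (star a) := by
    simpa [hφ.map_star] using ha
  calc φ (a * c) = star (φ (star c * star a)) := by
        rw [← hφ.map_star, star_mul, star_star, star_star]
    _ = φ a * φ c := by
      rw [hφ.map_mul_of_map_star_mul_self ha', star_mul, hφ.map_star, hφ.map_star, star_star,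
        star_star]

theorem mem_mulDomain_iff (hφ : IsUCP φ) {a : A} :
    a ∈ φ.mulDomain ↔
      φ (star a * a) = star (φ a) * φ a ∧ φ (a * star a) = φ a * star (φ a) := by
  refine ⟨fun ha => ?_, fun ⟨h₁, h₂⟩ c =>
    ⟨hφ.map_mul_of_map_star_mul_self h₁ c, hφ.map_mul_of_map_mul_star_self h₂ c⟩⟩
  rw [← hφ.map_star]
  exact ⟨(ha _).1, (ha _).2⟩

end CStar

theorem continuous {A B : Type*} [CStarAlgebra A] [CStarAlgebra B] {φ : A →ₗ[ℂ] B}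
    (hφ : IsUCP φ) : Continuous φ := by
  let _ : PartialOrder A := CStarAlgebra.spectralOrder A
  let _ : StarOrderedRing A := CStarAlgebra.spectralOrderedRing A
  let _ : PartialOrder B := CStarAlgebra.spectralOrder B
  let _ : StarOrderedRing B := CStarAlgebra.spectralOrderedRing B
  have hpos (x : A) (hx : 0 ≤ x) : 0 ≤ φ x := by
    obtain ⟨s, rfl⟩ := CStarAlgebra.nonneg_iff_eq_star_mul_self.1 hx
    exact (star_mul_self_nonneg _).trans (hφ.star_map_mul_map_le s)
  exact map_continuous (PositiveLinearMap.mk₀ φ hpos)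

end IsUCP

/-- Choi's multiplicative domain theorem: the multiplicative domain of a ucp map is a
C*-subalgebra (a topologically closed, star-closed subalgebra), and the restriction of the
map to it is a unital *-homomorphism. -/
theorem multiplicative_domain_is_cstar_subalgebra_and_hom
    {A B : Type*} [CStarAlgebra A] [CStarAlgebra B]
    (φ : A →ₗ[ℂ] B) (hφ : IsUCP φ) :
    letI M : Set A := {a : A | φ (star a * a) = star (φ a) * φ a ∧
      φ (a * star a) = φ a * star (φ a)}
    (1 : A) ∈ M ∧
    (∀ a ∈ M, ∀ b ∈ M, a + b ∈ M) ∧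
    (∀ (c : ℂ), ∀ a ∈ M, c • a ∈ M) ∧
    (∀ a ∈ M, ∀ b ∈ M, a * b ∈ M) ∧
    (∀ a ∈ M, star a ∈ M) ∧
    IsClosed M ∧
    φ 1 = 1 ∧
    (∀ a ∈ M, ∀ b ∈ M, φ (a * b) = φ a * φ b) ∧
    (∀ a ∈ M, φ (star a) = star (φ a)) := by
  have hM : {a : A | φ (star a * a) = star (φ a) * φ a ∧ φ (a * star a) = φ a * star (φ a)} =
      φ.mulDomain := Set.ext fun _ => hφ.mem_mulDomain_iff.symm
  simp only [hM, SetLike.mem_coe]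
  exact ⟨φ.one_mem_mulDomain hφ.1, fun _ ha _ hb => add_mem ha hb,
    fun c _ ha => SMulMemClass.smul_mem c ha, fun _ ha _ hb => mul_mem ha hb,
    fun _ => φ.star_mem_mulDomain hφ.map_star, φ.isClosed_mulDomain hφ.continuous, hφ.1,
    fun _ ha b _ => (ha b).2, fun a _ => hφ.map_star a⟩
end
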